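/- Let G be an embedded graph and k a natural number. Then k^{c(G)} · R(G; k+1, k, 1/k) = Σ_{φ ∈ R(G_m,k)} 2^{total(φ)}, where the sum is over all R-permissible k-valuations of the canonically checkerboard coloured medial graph G_m. -/

import Mathlib

/-!
A flag (graph-encoded map) model of ribbon graphs / cellularly embedded graphs,
together with the graph polynomials studied by Ellis-Monaghan and Moffatt in
"Evaluations of topological Tutte polynomials".

An embedded graph is encoded by its set of edges `E`, a number of isolated
vertices, and a fixed-point-free involution `t1` on the set of flags
`E × Bool × Bool` (each edge carries four flags; the fixed involutions
`t0 : (e,a,b) ↦ (e,!a,b)` and `t2 : (e,a,b) ↦ (e,a,!b)` cross the edge,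
resp. move to the other side of the edge, while `t1` encodes the rotation
structure at the vertices).  Vertices are the orbits of `⟨t1,t2⟩`, faces the
orbits of `⟨t0,t1⟩`, and connected components the orbits of `⟨t0,t1,t2⟩`.
-/

open scoped Classical

noncomputable section

/-- A ribbon graph (equivalently, a cellularly embedded graph) in the flag model. -/
structure RibbonGraph where
  E : Type
  fintypeE : Fintype E
  decE : DecidableEq E
  isolated : ℕ
  t1 : E × Bool × Bool → E × Bool × Bool
  inv1 : Function.Involutive t1
  fix1 : ∀ x, t1 x ≠ x

attribute [instance] RibbonGraph.fintypeE RibbonGraph.decE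

/-- The number of orbits of the group generated by a family of moves encoded by the
relation `r`, computed as the number of connected components of the associated graph. -/
def orbCount {α : Type} (r : α → α → Prop) : ℕ :=
  Nat.card (SimpleGraph.fromRel r).ConnectedComponent

namespace RibbonGraph

variable (G : RibbonGraph)

/-- The flags of an embedded graph: four per edge. -/
abbrev Flag : Type := G.E × Bool × Bool

/-- The involution crossing an edge. -/
def t0 : G.Flag → G.Flag := fun x => (x.1, !x.2.1, x.2.2)

/-- The involution moving to the other side of an edge. -/
def t2 : G.Flag → G.Flag := fun x => (x.1, x.2.1, !x.2.2)

lemma t0_invol : Function.Involutive G.t0 := by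
  intro x; simp [t0]

lemma t2_invol : Function.Involutive G.t2 := by
  intro x; simp [t2]

/-- Two flags are in the same vertex iff they are connected in this graph. -/
def vertexGraph : SimpleGraph G.Flag :=
  SimpleGraph.fromRel fun x y => G.t1 x = y ∨ G.t2 x = y

/-- The number of vertices. -/
def vCount : ℕ :=
  orbCount (fun x y : G.Flag => G.t1 x = y ∨ G.t2 x = y) + G.isolated

/-- The number of edges. -/
def eCount : ℕ := Fintype.card G.E

/-- The number of connected components of the spanning subgraph `(V, A)`. -/
def cSub (A : Finset G.E) : ℕ :=
  orbCount (fun x y : G.Flag => G.t1 x = y ∨ G.t2 x = y ∨ (x.1 ∈ A ∧ G.t0 x = y)) + G.isolated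

/-- The number of connected components. -/
def cCount : ℕ := G.cSub Finset.univ

/-- The number of boundary components (faces) of the spanning ribbon subgraph `(V, A)`. -/
def fSub (A : Finset G.E) : ℕ :=
  orbCount (fun x y : G.Flag => G.t1 x = y ∨ (if x.1 ∈ A then G.t0 x else G.t2 x) = y) +
    G.isolated

/-- The number of faces (boundary components of the ribbon graph). -/
def fCount : ℕ := G.fSub Finset.univ

/-- The rank `r(G) = v(G) - c(G)`. -/
def rank : ℕ := G.vCount - G.cCount

/-- The rank `r(A)` of the spanning subgraph `(V, A)`. -/
def rankSub (A : Finset G.E) : ℕ := G.vCount - G.cSub A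

/-- The nullity `n(A) = |A| - r(A)` of the spanning subgraph `(V, A)`. -/
def nullSub (A : Finset G.E) : ℕ := A.card + G.cSub A - G.vCount

/-- The nullity `n(G) = e(G) - r(G)`. -/
def nullity : ℕ := G.nullSub Finset.univ

/-- The Euler genus `γ(A) = c(A) - f(A) + n(A)` of the spanning ribbon subgraph `(V, A)`. -/
def genusSub (A : Finset G.E) : ℕ := 2 * G.cSub A + A.card - (G.vCount + G.fSub A)

/-! ### Partial Petrials and partial duals -/

/-- The flag involution realising a half-twist on the edges in `A`. -/
def twist (A : Finset G.E) : G.Flag → G.Flag :=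
  fun x => if x.1 ∈ A then (x.1, xor x.2.1 x.2.2, x.2.2) else x

lemma twist_twist (A : Finset G.E) (x : G.Flag) : G.twist A (G.twist A x) = x := by
  by_cases h : x.1 ∈ A <;> simp [twist, h, Bool.xor_assoc]

/-- The partial Petrial `G^{τ(A)}`: give a half-twist to every edge in `A`. -/
def petrial (A : Finset G.E) : RibbonGraph where
  E := G.E
  fintypeE := G.fintypeE
  decE := G.decE
  isolated := G.isolated
  t1 := fun x => G.twist A (G.t1 (G.twist A x))
  inv1 := by
    intro x
    show G.twist A (G.t1 (G.twist A (G.twist A (G.t1 (G.twist A x))))) = x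
    rw [G.twist_twist, G.inv1 (G.twist A x), G.twist_twist]
  fix1 := by
    intro x h
    have h2 := congrArg (G.twist A) h
    rw [G.twist_twist] at h2
    exact G.fix1 _ h2

/-- The flag involution realising partial duality on the edges in `A`. -/
def swapS (A : Finset G.E) : G.Flag → G.Flag :=
  fun x => if x.1 ∈ A then (x.1, x.2.2, x.2.1) else x

lemma swapS_swapS (A : Finset G.E) (x : G.Flag) : G.swapS A (G.swapS A x) = x := by
  by_cases h : x.1 ∈ A <;> simp [swapS, h]

/-- Chmutov's partial dual `G^{δ(A)}` of `G` with respect to `A ⊆ E(G)`. -/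
def pdual (A : Finset G.E) : RibbonGraph where
  E := G.E
  fintypeE := G.fintypeE
  decE := G.decE
  isolated := G.isolated
  t1 := fun x => G.swapS A (G.t1 (G.swapS A x))
  inv1 := by
    intro x
    show G.swapS A (G.t1 (G.swapS A (G.swapS A (G.t1 (G.swapS A x))))) = x
    rw [G.swapS_swapS, G.inv1 (G.swapS A x), G.swapS_swapS]
  fix1 := by
    intro x h
    have h2 := congrArg (G.swapS A) h
    rw [G.swapS_swapS] at h2
    exact G.fix1 _ h2

/-- The geometric dual `G*`. -/
def dual : RibbonGraph := G.pdual Finset.univ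

/-- The Petrie dual `G^×`. -/
def petrialAll : RibbonGraph := G.petrial Finset.univ

/-! ### Graph polynomials -/

/-- The Bollobás–Riordan ribbon graph polynomial
`R(G;x,y,z) = Σ_{A⊆E} (x-1)^{r(G)-r(A)} y^{n(A)} z^{c(A)-f(A)+n(A)}`. -/
def BR {R : Type} [CommRing R] (x y z : R) : R :=
  ∑ A : Finset G.E,
    (x - 1) ^ (G.rank - G.rankSub A) * y ^ G.nullSub A * z ^ G.genusSub A

/-- The Tutte polynomial `T(G;x,y) = Σ_{A⊆E} (x-1)^{r(G)-r(A)} (y-1)^{n(A)}`. -/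
def tutte {R : Type} [CommRing R] (x y : R) : R :=
  ∑ A : Finset G.E, (x - 1) ^ (G.rank - G.rankSub A) * (y - 1) ^ G.nullSub A

/-- The chromatic polynomial of the underlying abstract graph of `G`, via Whitney's
rank expansion `χ(G;λ) = Σ_{A⊆E} (-1)^{|A|} λ^{c(A)}`. -/
def chromatic {R : Type} [CommRing R] (l : R) : R :=
  ∑ A : Finset G.E, (-1 : R) ^ A.card * l ^ G.cSub A

/-- The Penrose polynomial `P(G;λ) = Σ_{A⊆E} (-1)^{|A|} λ^{f(G^{τ(A)})}`. -/
def penrose {R : Type} [CommRing R] (l : R) : R :=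
  ∑ A : Finset G.E, (-1 : R) ^ A.card * l ^ (G.petrial A).fCount

/-- The topological transition polynomial `Q(G;(a,b,c),t)`, as the state sum over the
states of the medial graph `G_m`:  a state chooses at each vertex `v_e` of `G_m` a white
smoothing (`e ∈ A`), a black smoothing (`e ∈ B`) or a crossing (`e ∈ C`), and its number
of closed curves is the number of boundary components of the spanning ribbon subgraph of
`G^{τ(C)}` on the edge set `A ∪ C`. -/
def transition {R : Type} [CommRing R] (a b c t : R) : R :=
  ∑ C : Finset G.E, ∑ A ∈ (Finset.univ \ C).powerset,
    a ^ A.card * b ^ (G.eCount - A.card - C.card) * c ^ C.card *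
      t ^ ((G.petrial C).fSub (A ∪ C))

/-! ### Topological predicates -/

/-- `G` is orientable iff its flags admit a consistent 2-colouring
(the graph-encoded map is bipartite). -/
def Orientable : Prop :=
  ∃ o : G.Flag → Bool,
    (∀ x, o (G.t0 x) = !o x) ∧ (∀ x, o (G.t1 x) = !o x) ∧ (∀ x, o (G.t2 x) = !o x)

/-- `G` is checkerboard colourable iff its faces can be properly 2-coloured. -/
def CheckerboardColourable : Prop :=
  ∃ c : G.Flag → Bool,
    (∀ x, c (G.t0 x) = c x) ∧ (∀ x, c (G.t1 x) = c x) ∧ (∀ x, c (G.t2 x) = !c x)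

/-- `G` is a plane graph: connected with Euler genus `0`. -/
def IsPlane : Prop :=
  G.cCount = 1 ∧ (G.vCount : ℤ) - (G.eCount : ℤ) + (G.fCount : ℤ) = 2

/-- `G` has no loops: no edge has both of its ends on the same vertex. -/
def Loopless : Prop := ∀ x : G.Flag, ¬ G.vertexGraph.Reachable x (G.t0 x)

/-- `G` contains a loop. -/
def HasLoop : Prop := ∃ x : G.Flag, G.vertexGraph.Reachable x (G.t0 x)

/-- The edge `e` of `G` is not a loop. -/
def NonLoop (e : G.E) : Prop :=
  ¬ G.vertexGraph.Reachable (e, true, true) (e, false, true)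

/-- The underlying abstract graph of `G` admits a proper vertex 4-colouring. -/
def FourColourable : Prop :=
  ∃ c : G.Flag → Fin 4,
    (∀ x, c (G.t1 x) = c x) ∧ (∀ x, c (G.t2 x) = c x) ∧ (∀ x, c (G.t0 x) ≠ c x)

/-- `G` is cubic: every vertex has degree `3`, i.e. carries six flags. -/
def Cubic : Prop :=
  G.isolated = 0 ∧
    ∀ C : G.vertexGraph.ConnectedComponent,
      Nat.card {x : G.Flag // G.vertexGraph.connectedComponentMk x = C} = 6

/-- The number of proper edge 3-colourings of `G`: edges sharing a vertex receive
distinct colours. -/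
def EdgeColourings3 : ℕ :=
  Nat.card {c : G.E → Fin 3 //
    ∀ x y : G.Flag, G.vertexGraph.Reachable x y → x.1 ≠ y.1 → c x.1 ≠ c y.1}

/-! ### `k`-valuations of the medial graph

The edges of the medial graph `G_m` correspond to the corners `{x, t1 x}` of `G`,
together with one free loop for each isolated vertex of `G`.  The four medial edges
incident with the medial vertex `v_e` correspond to the four flags of `e`. -/

section Valuations

variable {k : ℕ}

/-- The colours around `v_e` are paired across the white faces. -/
def WhiteAt (c : G.Flag → Fin k) (e : G.E) : Prop :=
  c (e, true, true) = c (e, false, true) ∧ c (e, true, false) = c (e, false, false)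

/-- The colours around `v_e` are paired across the black faces. -/
def BlackAt (c : G.Flag → Fin k) (e : G.E) : Prop :=
  c (e, true, true) = c (e, true, false) ∧ c (e, false, true) = c (e, false, false)

/-- The colours around `v_e` are paired crosswise. -/
def CrossAt (c : G.Flag → Fin k) (e : G.E) : Prop :=
  c (e, true, true) = c (e, false, false) ∧ c (e, true, false) = c (e, false, true)

/-- All four colours around `v_e` agree. -/
def TotalAt (c : G.Flag → Fin k) (e : G.E) : Prop :=
  c (e, true, true) = c (e, false, true) ∧ c (e, true, true) = c (e, true, false) ∧
    c (e, true, true) = c (e, false, false)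

/-- A `k`-valuation of the medial graph `G_m`: an edge `k`-colouring of `G_m` such that
every vertex of `G_m` is incident with an even number of edges of each colour. -/
def IsValuation (c : G.Flag → Fin k) : Prop :=
  (∀ x, c (G.t1 x) = c x) ∧
    ∀ e : G.E, G.WhiteAt c e ∨ G.BlackAt c e ∨ G.CrossAt c e

/-- The number of vertices of `G_m` of total type in a valuation. -/
def totalCount (c : G.Flag → Fin k) : ℕ :=
  (Finset.univ.filter fun e : G.E => G.TotalAt c e).card

/-- The number of vertices of `G_m` of white type in a valuation. -/
def whiteCount (c : G.Flag → Fin k) : ℕ :=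
  (Finset.univ.filter fun e : G.E => G.WhiteAt c e ∧ ¬ G.TotalAt c e).card

/-- The number of vertices of `G_m` of black type in a valuation. -/
def blackCount (c : G.Flag → Fin k) : ℕ :=
  (Finset.univ.filter fun e : G.E => G.BlackAt c e ∧ ¬ G.TotalAt c e).card

/-- The number of vertices of `G_m` of crossing type in a valuation. -/
def crossCount (c : G.Flag → Fin k) : ℕ :=
  (Finset.univ.filter fun e : G.E => G.CrossAt c e ∧ ¬ G.TotalAt c e).card

/-- The set `K(G_m,k)` of all `k`-valuations of `G_m` (a valuation also colours the
free loop of `G_m` arising from each isolated vertex of `G`). -/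
def kvals (k : ℕ) : Finset ((G.Flag → Fin k) × (Fin G.isolated → Fin k)) :=
  Finset.univ.filter fun φ => G.IsValuation φ.1

/-- The set `R(G_m,k)` of `R`-permissible `k`-valuations: every vertex of `G_m` is of
white, black or total type. -/
def kvalsR (k : ℕ) : Finset ((G.Flag → Fin k) × (Fin G.isolated → Fin k)) :=
  Finset.univ.filter fun φ =>
    G.IsValuation φ.1 ∧ ∀ e : G.E, ¬ (G.CrossAt φ.1 e ∧ ¬ G.TotalAt φ.1 e)

/-- The set `P(G_m,k)` of `P`-permissible `k`-valuations: every vertex of `G_m` is of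
white, crossing or total type. -/
def kvalsP (k : ℕ) : Finset ((G.Flag → Fin k) × (Fin G.isolated → Fin k)) :=
  Finset.univ.filter fun φ =>
    G.IsValuation φ.1 ∧ ∀ e : G.E, ¬ (G.BlackAt φ.1 e ∧ ¬ G.TotalAt φ.1 e)

/-- The set `A(G_m,k)` of admissible `k`-valuations: every vertex of `G_m` is of
white or crossing type. -/
def kvalsA (k : ℕ) : Finset ((G.Flag → Fin k) × (Fin G.isolated → Fin k)) :=
  Finset.univ.filter fun φ =>
    G.IsValuation φ.1 ∧
      ∀ e : G.E, ¬ G.TotalAt φ.1 e ∧ (G.WhiteAt φ.1 e ∨ G.CrossAt φ.1 e)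

end Valuations

/-! ### Doubling all edges -/

/-- The flag involution of the doubled graph `D(G)`. -/
def dblT1 : (G.E × Bool) × Bool × Bool → (G.E × Bool) × Bool × Bool := fun x =>
  if x.1.2 = x.2.2 then
    (((G.t1 (x.1.1, x.2)).1, (G.t1 (x.1.1, x.2)).2.2), (G.t1 (x.1.1, x.2)).2)
  else ((x.1.1, x.2.2), x.2.1, x.1.2)

lemma dblT1_invol : Function.Involutive G.dblT1 := by
  rintro ⟨⟨e, i⟩, a, b⟩
  by_cases h : i = b
  · subst h
    simp [dblT1, G.inv1 (e, a, i)]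
  · simp [dblT1, h, Ne.symm h]

lemma dblT1_fix (x) : G.dblT1 x ≠ x := by
  rintro hcon
  obtain ⟨⟨e, i⟩, a, b⟩ := x
  by_cases h : i = b
  · subst h
    simp only [dblT1, if_pos rfl] at hcon
    have h1 : (G.t1 (e, a, i)).1 = e := congrArg (fun z => z.1.1) hcon
    have h2 : (G.t1 (e, a, i)).2 = (a, i) := congrArg (fun z => z.2) hcon
    exact G.fix1 (e, a, i) (Prod.ext h1 h2)
  · simp only [dblT1, if_neg h] at hcon
    have h1 : b = i := congrArg (fun z => z.1.2) hcon
    exact h h1.symm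

/-- The embedded graph `D(G)` obtained from `G` by doubling every edge: for each edge a
parallel copy is embedded so that the two copies bound a bigon face. -/
def double : RibbonGraph where
  E := G.E × Bool
  fintypeE := inferInstance
  decE := inferInstance
  isolated := G.isolated
  t1 := G.dblT1
  inv1 := G.dblT1_invol
  fix1 := G.dblT1_fix

end RibbonGraph

/-!
Fix a state `A ⊆ E(G)` of the medial graph: smooth `v_e` along the white faces for `e ∈ A`
and along the black faces otherwise. Its closed curves are the boundary components of the
spanning ribbon subgraph `(V, A)`, so the colourings constant on them (together with the free
loops) number `k^{f(A)}`. An `R`-permissible valuation `φ` is such a colouring for exactly the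
states `A` with `W ⊆ A ⊆ W ∪ T`, where `W` are its non-total white vertices and `T` its total
ones, i.e. for `2^{total(φ)}` states. Double counting gives `Σ_{R(G_m,k)} 2^{total} = Σ_A k^{f(A)}`.

On the polynomial side the `A`-term of `k^{c(G)} R(G; k+1, k, 1/k)` is `k^{f(A)}` because
`c(G) + r(G) - r(A) + n(A) = 2c(A) + |A| - v(G) = f(A) + γ(A)`. In `ℕ` this needs
`c(G) ≤ c(A) ≤ v(G) ≤ |A| + c(A)` and Euler's inequality `γ(A) ≥ 0`. The latter follows by adding
the edges of `A` one at a time: an edge joining two components merges two faces (a parity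
argument on the faces with the edge cut open), and any other edge splits at most one face.
-/

namespace SimpleGraph

variable {V : Type*} {G G' : SimpleGraph V}

theorem fromRel_adj_of_ne {r : V → V → Prop} {x y : V} (hne : x ≠ y) (h : r x y) :
    (fromRel r).Adj x y :=
  (fromRel_adj r x y).2 ⟨hne, Or.inl h⟩

theorem fromRel_le_fromRel {r r' : V → V → Prop} (h : ∀ x y, x ≠ y → r x y → r' x y) :
    fromRel r ≤ fromRel r' := by
  intro x y hxy
  rw [fromRel_adj] at hxy ⊢
  exact ⟨hxy.1, hxy.2.imp (h x y hxy.1) (h y x hxy.1.symm)⟩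

theorem reachable_of_fromRel_adj {r : V → V → Prop} (h : ∀ x y, r x y → G.Reachable x y)
    {x y : V} (hadj : (fromRel r).Adj x y) : G.Reachable x y :=
  hadj.2.elim (h x y) fun h' => (h y x h').symm

theorem forall_fromRel_adj_imp_eq_iff {β : Type*} {r : V → V → Prop} {c : V → β} :
    (∀ x y, (fromRel r).Adj x y → c x = c y) ↔ ∀ x y, r x y → c x = c y := by
  refine ⟨fun h x y hxy => ?_, fun h x y hxy => hxy.2.elim (h x y) fun h' => (h y x h').symm⟩
  by_cases hne : x = y
  · rw [hne]
  · exact h x y (fromRel_adj_of_ne hne hxy)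

theorem Reachable.of_forall_adj_reachable (h : ∀ x y, G.Adj x y → G'.Reachable x y)
    {x y : V} (hxy : G.Reachable x y) : G'.Reachable x y := by
  obtain ⟨p⟩ := hxy
  induction p with
  | nil => rfl
  | cons hadj _ ih => exact (h _ _ hadj).trans ih

theorem Reachable.apply_eq_of_forall_adj {β : Type*} {c : V → β}
    (hc : ∀ x y, G.Adj x y → c x = c y) {x y : V} (h : G.Reachable x y) : c x = c y := by
  obtain ⟨p⟩ := h
  induction p with
  | nil => rfl
  | cons hadj _ ih => exact (hc _ _ hadj).trans ih

theorem card_connectedComponent_le_of_forall_adj_reachable [Finite V]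
    (h : ∀ x y, G.Adj x y → G'.Reachable x y) :
    Nat.card G'.ConnectedComponent ≤ Nat.card G.ConnectedComponent :=
  Nat.card_le_card_of_surjective
    (ConnectedComponent.lift G'.connectedComponentMk fun _ _ p _ =>
      ConnectedComponent.sound (Reachable.of_forall_adj_reachable h ⟨p⟩))
    fun C => C.ind fun v => ⟨G.connectedComponentMk v, rfl⟩

theorem card_forall_adj_eq {β : Type*} [Finite V] [Finite β] (G : SimpleGraph V) :
    Nat.card {c : V → β // ∀ x y, G.Adj x y → c x = c y} =
      Nat.card β ^ Nat.card G.ConnectedComponent := by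
  rw [← Nat.card_fun]
  exact Nat.card_congr
    { toFun := fun c => ConnectedComponent.lift c.1 fun _ _ p _ =>
        Reachable.apply_eq_of_forall_adj c.2 ⟨p⟩
      invFun := fun g => ⟨fun x => g (G.connectedComponentMk x), fun _ _ hadj =>
        congrArg g (ConnectedComponent.sound hadj.reachable)⟩
      left_inv := fun _ => rfl
      right_inv := fun g => funext fun C => C.ind fun _ => rfl }

theorem reachable_sup_edge_iff {u v x y : V} :
    (G ⊔ edge u v).Reachable x y ↔ G.Reachable x y ∨
      (G.Reachable x u ∧ G.Reachable v y) ∨ (G.Reachable x v ∧ G.Reachable u y) := by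
  constructor
  · rintro ⟨p⟩
    induction p with
    | nil => exact Or.inl .rfl
    | cons hadj _ ih =>
      rw [sup_adj, edge_adj] at hadj
      rcases hadj with hadj | ⟨⟨rfl, rfl⟩ | ⟨rfl, rfl⟩, -⟩ <;>
        rcases ih with h | ⟨h₁, h₂⟩ | ⟨h₁, h₂⟩
      · exact Or.inl (hadj.reachable.trans h)
      · exact Or.inr (Or.inl ⟨hadj.reachable.trans h₁, h₂⟩)
      · exact Or.inr (Or.inr ⟨hadj.reachable.trans h₁, h₂⟩)
      · exact Or.inr (Or.inl ⟨.rfl, h⟩)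
      · exact Or.inr (Or.inl ⟨.rfl, h₂⟩)
      · exact Or.inl h₂
      · exact Or.inr (Or.inr ⟨.rfl, h⟩)
      · exact Or.inl h₂
      · exact Or.inr (Or.inr ⟨.rfl, h₂⟩)
  · have hle : G ≤ G ⊔ edge u v := le_sup_left
    have huv : (G ⊔ edge u v).Reachable u v := by
      by_cases h : u = v
      · rw [h]
      · exact Adj.reachable (Or.inr ((edge_adj u v u v).2 ⟨Or.inl ⟨rfl, rfl⟩, h⟩))
    rintro (h | ⟨h₁, h₂⟩ | ⟨h₁, h₂⟩)
    · exact h.mono hle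
    · exact (h₁.mono hle).trans (huv.trans (h₂.mono hle))
    · exact (h₁.mono hle).trans (huv.symm.trans (h₂.mono hle))

theorem reachable_sup_edge_iff_of_reachable {u v x y : V} (h : G.Reachable u v) :
    (G ⊔ edge u v).Reachable x y ↔ G.Reachable x y := by
  rw [reachable_sup_edge_iff]
  refine ⟨fun h' => ?_, Or.inl⟩
  rcases h' with h' | ⟨h₁, h₂⟩ | ⟨h₁, h₂⟩
  exacts [h', h₁.trans (h.trans h₂), h₁.trans (h.symm.trans h₂)]

/-- A new edge can only merge the component of `v` into another one. -/
theorem card_connectedComponent_le_sup_edge_add_one [Finite V] (u v : V) :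
    Nat.card G.ConnectedComponent ≤ Nat.card (G ⊔ edge u v).ConnectedComponent + 1 := by
  let f : G.ConnectedComponent → Option (G ⊔ edge u v).ConnectedComponent := fun C =>
    if C = G.connectedComponentMk v then none else some (C.map (Hom.ofLE le_sup_left))
  have hf : Function.Injective f := by
    intro C D hCD
    induction C using ConnectedComponent.ind with | h x => ?_
    induction D using ConnectedComponent.ind with | h y => ?_
    by_cases hx : G.connectedComponentMk x = G.connectedComponentMk v <;>
      by_cases hy : G.connectedComponentMk y = G.connectedComponentMk v <;>
      simp only [f, hx, hy, if_true, if_false, reduceCtorEq, Option.some.injEq,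
        ConnectedComponent.map_mk, ConnectedComponent.eq] at hCD ⊢
    rw [ConnectedComponent.eq] at hx hy
    rcases reachable_sup_edge_iff.1 hCD with h | ⟨-, h⟩ | ⟨h, -⟩
    exacts [h, absurd h.symm hy, absurd h hx]
  simpa [Finite.card_option] using Nat.card_le_card_of_injective f hf

theorem card_connectedComponent_sup_edge_add_one_le [Finite V] {u v : V}
    (h : ¬ G.Reachable u v) :
    Nat.card (G ⊔ edge u v).ConnectedComponent + 1 ≤ Nat.card G.ConnectedComponent := by
  have := Fintype.ofFinite G.ConnectedComponent
  have := Fintype.ofFinite (G ⊔ edge u v).ConnectedComponent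
  rw [Nat.card_eq_fintype_card, Nat.card_eq_fintype_card]
  refine Fintype.card_lt_of_surjective_not_injective _
    (ConnectedComponent.surjective_map_ofLE le_sup_left) fun hinj => h ?_
  rw [← ConnectedComponent.eq]
  apply hinj
  simp only [ConnectedComponent.map_mk, ConnectedComponent.eq]
  exact reachable_sup_edge_iff.2 (Or.inr (Or.inl ⟨.rfl, .rfl⟩))

/-- Parity count: `τ` pairs up the component of `x`, and `σ` pairs up its non-fixed points. -/
theorem even_card_fixedPoints_reachable [Fintype V] [DecidableEq V] {σ τ : V → V}
    (hσ : Function.Involutive σ) (hτ : Function.Involutive τ) (hτ_ne : ∀ x, τ x ≠ x) (x : V) :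
    Even (Finset.univ.filter fun y =>
      (fromRel fun a b => τ a = b ∨ σ a = b).Reachable x y ∧ σ y = y).card := by
  set Γ := fromRel fun a b => τ a = b ∨ σ a = b
  set K := Finset.univ.filter (Γ.Reachable x)
  have hK : ∀ f : V → V, (∀ a, f a = a ∨ τ a = f a ∨ σ a = f a) → ∀ a ∈ K, f a ∈ K := by
    intro f hf a ha
    simp only [K, Finset.mem_filter, Finset.mem_univ, true_and] at ha ⊢
    by_cases hfa : f a = a
    · rwa [hfa]
    · exact ha.trans (fromRel_adj_of_ne (Ne.symm hfa) ((hf a).resolve_left hfa)).reachable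
  have hall : ∑ a ∈ K, (1 : ZMod 2) = 0 :=
    Finset.sum_involution (fun a _ => τ a) (fun _ _ => by decide) (fun a _ _ => hτ_ne a)
      (fun a => hK τ (fun a => Or.inr (Or.inl rfl)) a) (fun a _ => hτ a)
  have hmoved : ∑ a ∈ K, (if σ a = a then 0 else 1 : ZMod 2) = 0 := by
    refine Finset.sum_involution (fun a _ => σ a) (fun a _ => ?_) (fun a _ h => by simpa using h)
      (fun a => hK σ (fun a => Or.inr (Or.inr rfl)) a) (fun a _ => hσ a)
    by_cases h : σ a = a
    · simp [h]
    · have h' : σ (σ a) ≠ σ a := by rwa [hσ a, ne_comm]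
      simp only [h, h', if_false]
      decide
  rw [← ZMod.natCast_eq_zero_iff_even, ← Finset.filter_filter, ← Finset.sum_boole]
  calc ∑ a ∈ K, (if σ a = a then 1 else 0 : ZMod 2)
      = ∑ a ∈ K, (1 : ZMod 2) - ∑ a ∈ K, (if σ a = a then 0 else 1 : ZMod 2) := by
        rw [← Finset.sum_sub_distrib]
        exact Finset.sum_congr rfl fun a _ => by split_ifs <;> decide
    _ = 0 := by rw [hall, hmoved, sub_zero]

end SimpleGraph

namespace RibbonGraph

open SimpleGraph

variable (G : RibbonGraph)

def componentGraph (A : Finset G.E) : SimpleGraph G.Flag :=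
  fromRel fun x y => G.t1 x = y ∨ G.t2 x = y ∨ (x.1 ∈ A ∧ G.t0 x = y)

def faceMove (A : Finset G.E) (x : G.Flag) : G.Flag :=
  if x.1 ∈ A then G.t0 x else G.t2 x

def faceGraph (A : Finset G.E) : SimpleGraph G.Flag :=
  fromRel fun x y => G.t1 x = y ∨ G.faceMove A x = y

/-- The faces of `(V, A)` with the edge `e` cut open: the flags of `e` are fixed. -/
def cutFaceMove (A : Finset G.E) (e : G.E) (x : G.Flag) : G.Flag :=
  if x.1 = e then x else G.faceMove A x

def cutFaceGraph (A : Finset G.E) (e : G.E) : SimpleGraph G.Flag :=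
  fromRel fun x y => G.t1 x = y ∨ G.cutFaceMove A e x = y

theorem vCount_eq : G.vCount = Nat.card G.vertexGraph.ConnectedComponent + G.isolated := rfl

theorem cSub_eq (A : Finset G.E) :
    G.cSub A = Nat.card (G.componentGraph A).ConnectedComponent + G.isolated := rfl

theorem fSub_eq (A : Finset G.E) :
    G.fSub A = Nat.card (G.faceGraph A).ConnectedComponent + G.isolated := rfl

variable {G}

@[simp] lemma t0_mk (e : G.E) (a b : Bool) : G.t0 (e, a, b) = (e, !a, b) := rfl

@[simp] lemma t2_mk (e : G.E) (a b : Bool) : G.t2 (e, a, b) = (e, a, !b) := rfl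

theorem t0_ne (x : G.Flag) : G.t0 x ≠ x := by
  obtain ⟨e, a, b⟩ := x; simp

theorem t2_ne (x : G.Flag) : G.t2 x ≠ x := by
  obtain ⟨e, a, b⟩ := x; simp

theorem faceMove_mk_of_mem {A : Finset G.E} {e : G.E} (he : e ∈ A) (a b : Bool) :
    G.faceMove A (e, a, b) = (e, !a, b) := by
  simp [faceMove, he]

theorem faceMove_mk_of_notMem {A : Finset G.E} {e : G.E} (he : e ∉ A) (a b : Bool) :
    G.faceMove A (e, a, b) = (e, a, !b) := by
  simp [faceMove, he]

theorem faceMove_insert_of_ne {A : Finset G.E} {e : G.E} {x : G.Flag} (hx : x.1 ≠ e) :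
    G.faceMove (insert e A) x = G.faceMove A x := by
  simp [faceMove, hx]

theorem faceMove_ne (A : Finset G.E) (x : G.Flag) : G.faceMove A x ≠ x := by
  obtain ⟨e, a, b⟩ := x
  by_cases he : e ∈ A <;> simp [faceMove, he]

theorem cutFaceMove_involutive (A : Finset G.E) (e : G.E) :
    Function.Involutive (G.cutFaceMove A e) := by
  rintro ⟨e', a, b⟩
  by_cases he : e' = e
  · simp [cutFaceMove, he]
  · by_cases he' : e' ∈ A <;> simp [cutFaceMove, faceMove, he, he']

theorem cutFaceMove_eq_self_iff {A : Finset G.E} {e : G.E} {x : G.Flag} :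
    G.cutFaceMove A e x = x ↔ x.1 = e := by
  by_cases hx : x.1 = e <;> simp [cutFaceMove, hx, faceMove_ne]

theorem componentGraph_empty : G.componentGraph ∅ = G.vertexGraph := by
  ext x y; simp [componentGraph, vertexGraph]

theorem faceGraph_empty : G.faceGraph ∅ = G.vertexGraph := by
  ext x y; simp [faceGraph, vertexGraph, faceMove]

theorem componentGraph_mono {A B : Finset G.E} (h : A ⊆ B) :
    G.componentGraph A ≤ G.componentGraph B :=
  fromRel_le_fromRel fun _ _ _ hxy => hxy.imp_right (Or.imp_right (And.imp_left (h ·)))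

theorem faceGraph_le_componentGraph (A : Finset G.E) : G.faceGraph A ≤ G.componentGraph A := by
  refine fromRel_le_fromRel fun x y _ hxy => hxy.imp_right fun h => ?_
  by_cases hx : x.1 ∈ A <;> simp_all [faceMove]

theorem cutFaceGraph_le_faceGraph (A : Finset G.E) (e : G.E) :
    G.cutFaceGraph A e ≤ G.faceGraph A := by
  refine fromRel_le_fromRel fun x y hne hxy => hxy.imp_right fun h => ?_
  by_cases hx : x.1 = e
  · simp [cutFaceMove, hx, hne] at h
  · simpa [cutFaceMove, hx] using h

theorem cutFaceGraph_le_componentGraph (A : Finset G.E) (e : G.E) :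
    G.cutFaceGraph A e ≤ G.componentGraph A :=
  (cutFaceGraph_le_faceGraph A e).trans (faceGraph_le_componentGraph A)

theorem componentGraph_adj_t1 (A : Finset G.E) (x : G.Flag) :
    (G.componentGraph A).Adj x (G.t1 x) :=
  fromRel_adj_of_ne (G.fix1 x).symm (Or.inl rfl)

theorem componentGraph_adj_t2 (A : Finset G.E) (x : G.Flag) :
    (G.componentGraph A).Adj x (G.t2 x) :=
  fromRel_adj_of_ne (t2_ne x).symm (Or.inr (Or.inl rfl))

theorem faceGraph_adj_t1 (A : Finset G.E) (x : G.Flag) : (G.faceGraph A).Adj x (G.t1 x) :=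
  fromRel_adj_of_ne (G.fix1 x).symm (Or.inl rfl)

theorem faceGraph_adj_faceMove (A : Finset G.E) (x : G.Flag) :
    (G.faceGraph A).Adj x (G.faceMove A x) :=
  fromRel_adj_of_ne (faceMove_ne A x).symm (Or.inr rfl)

theorem faceGraph_adj_mk_of_mem {A : Finset G.E} {e : G.E} (he : e ∈ A) (a b : Bool) :
    (G.faceGraph A).Adj (e, a, b) (e, !a, b) := by
  simpa only [faceMove_mk_of_mem he] using faceGraph_adj_faceMove A (e, a, b)

theorem cutFaceGraph_adj_t1 (A : Finset G.E) (e : G.E) (x : G.Flag) :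
    (G.cutFaceGraph A e).Adj x (G.t1 x) :=
  fromRel_adj_of_ne (G.fix1 x).symm (Or.inl rfl)

theorem componentGraph_reachable_mk (A : Finset G.E) (e : G.E) (a b c : Bool) :
    (G.componentGraph A).Reachable (e, a, b) (e, a, c) := by
  obtain rfl | rfl : c = b ∨ c = !b := by cases b <;> cases c <;> simp
  exacts [.rfl, (componentGraph_adj_t2 A _).reachable]

theorem componentGraph_insert_adj_reachable {A : Finset G.E} {e : G.E} {x y : G.Flag}
    (h : (G.componentGraph (insert e A)).Adj x y) :
    (G.componentGraph A ⊔ edge (e, true, true) (e, false, true)).Reachable x y := by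
  have hle : G.componentGraph A ≤ G.componentGraph A ⊔ edge (e, true, true) (e, false, true) :=
    le_sup_left
  refine reachable_of_fromRel_adj (fun x y hxy => ?_) h
  rcases hxy with rfl | rfl | ⟨hx, rfl⟩
  · exact (componentGraph_adj_t1 A x).reachable.mono hle
  · exact (componentGraph_adj_t2 A x).reachable.mono hle
  rcases Finset.mem_insert.1 hx with hx | hx
  · obtain ⟨e', a, b⟩ := x
    obtain rfl : e' = e := hx
    rw [reachable_sup_edge_iff]
    cases a
    · exact Or.inr (Or.inr ⟨componentGraph_reachable_mk .., componentGraph_reachable_mk ..⟩)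
    · exact Or.inr (Or.inl ⟨componentGraph_reachable_mk .., componentGraph_reachable_mk ..⟩)
  · exact (fromRel_adj_of_ne (t0_ne x).symm (Or.inr (Or.inr ⟨hx, rfl⟩))).reachable.mono hle

theorem card_componentGraph_le_insert_add_one (A : Finset G.E) (e : G.E) :
    Nat.card (G.componentGraph A).ConnectedComponent ≤
      Nat.card (G.componentGraph (insert e A)).ConnectedComponent + 1 :=
  (card_connectedComponent_le_sup_edge_add_one _ _).trans <| Nat.add_le_add_right
    (card_connectedComponent_le_of_forall_adj_reachable fun _ _ =>
      componentGraph_insert_adj_reachable) 1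

theorem card_componentGraph_le_insert_of_reachable {A : Finset G.E} {e : G.E}
    (h : (G.componentGraph A).Reachable (e, true, true) (e, false, true)) :
    Nat.card (G.componentGraph A).ConnectedComponent ≤
      Nat.card (G.componentGraph (insert e A)).ConnectedComponent :=
  card_connectedComponent_le_of_forall_adj_reachable fun _ _ hxy =>
    (reachable_sup_edge_iff_of_reachable h).1 (componentGraph_insert_adj_reachable hxy)

theorem card_faceGraph_insert_le_add_one {A : Finset G.E} {e : G.E} (he : e ∉ A) :
    Nat.card (G.faceGraph (insert e A)).ConnectedComponent ≤
      Nat.card (G.faceGraph A).ConnectedComponent + 1 := by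
  set F := G.faceGraph (insert e A)
  have hle : F ≤ F ⊔ edge (e, true, true) (e, true, false) := le_sup_left
  have across : ∀ a c b, F.Reachable (e, a, b) (e, c, b) := by
    intro a c b
    obtain rfl | rfl : c = a ∨ c = !a := by cases a <;> cases c <;> simp
    · rfl
    · exact (faceGraph_adj_mk_of_mem (Finset.mem_insert_self e A) a b).reachable
  have hK : ∀ x y, (G.faceGraph A ⊔ F).Adj x y →
      (F ⊔ edge (e, true, true) (e, true, false)).Reachable x y := by
    rintro x y (hxy | hxy)
    · refine reachable_of_fromRel_adj (fun x y hxy => ?_) hxy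
      rcases hxy with rfl | rfl
      · exact (faceGraph_adj_t1 _ x).reachable.mono hle
      by_cases hx : x.1 = e
      · obtain ⟨e', a, b⟩ := x
        obtain rfl : e' = e := hx
        rw [faceMove_mk_of_notMem he, reachable_sup_edge_iff]
        cases b
        · exact Or.inr (Or.inr ⟨across .., across ..⟩)
        · exact Or.inr (Or.inl ⟨across .., across ..⟩)
      · rw [← faceMove_insert_of_ne hx]
        exact (faceGraph_adj_faceMove _ x).reachable.mono hle
    · exact hxy.reachable.mono hle
  calc Nat.card F.ConnectedComponent
      ≤ Nat.card (F ⊔ edge (e, true, true) (e, true, false)).ConnectedComponent + 1 :=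
        card_connectedComponent_le_sup_edge_add_one _ _
    _ ≤ Nat.card (G.faceGraph A ⊔ F).ConnectedComponent + 1 :=
        Nat.add_le_add_right (card_connectedComponent_le_of_forall_adj_reachable hK) 1
    _ ≤ Nat.card (G.faceGraph A).ConnectedComponent + 1 :=
        Nat.add_le_add_right (ConnectedComponent.card_le_card_of_le le_sup_left) 1

/-- Each component of the cut-open face graph contains an even number of flags of `e`. -/
theorem cutFaceGraph_reachable_mk {A : Finset G.E} {e : G.E} {a b : Bool}
    (h₁ : ¬ (G.cutFaceGraph A e).Reachable (e, a, b) (e, !a, b))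
    (h₂ : ¬ (G.cutFaceGraph A e).Reachable (e, a, b) (e, !a, !b)) :
    (G.cutFaceGraph A e).Reachable (e, a, b) (e, a, !b) := by
  by_contra h₃
  have : Even ({(e, a, b)} : Finset G.Flag).card := by
    convert even_card_fixedPoints_reachable (cutFaceMove_involutive A e) G.inv1 G.fix1 (e, a, b)
    ext ⟨e', c, d⟩
    simp only [Finset.mem_filter, Finset.mem_univ, true_and, Finset.mem_singleton,
      cutFaceMove_eq_self_iff]
    constructor
    · rintro ⟨⟩
      exact ⟨.rfl, rfl⟩
    · rintro ⟨hr, rfl⟩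
      cases a <;> cases b <;> cases c <;> cases d <;> simp_all [cutFaceGraph]
  exact Nat.not_even_one this

theorem cutFaceGraph_reachable_of_not_reachable {A : Finset G.E} {e : G.E}
    (h : ¬ (G.componentGraph A).Reachable (e, true, true) (e, false, true)) (a b c : Bool) :
    (G.cutFaceGraph A e).Reachable (e, a, b) (e, a, c) := by
  have across : ∀ a b c, ¬ (G.cutFaceGraph A e).Reachable (e, a, b) (e, !a, c) := by
    intro a b c hr
    replace hr := hr.mono (cutFaceGraph_le_componentGraph A e)
    apply h
    cases a
    · exact ((componentGraph_reachable_mk ..).trans hr.symm).trans (componentGraph_reachable_mk ..)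
    · exact ((componentGraph_reachable_mk ..).trans hr).trans (componentGraph_reachable_mk ..)
  obtain rfl | rfl : c = b ∨ c = !b := by cases b <;> cases c <;> simp
  exacts [.rfl, cutFaceGraph_reachable_mk (across a b b) (across a b (!b))]

theorem card_faceGraph_insert_add_one_le {A : Finset G.E} {e : G.E} (he : e ∉ A)
    (h : ¬ (G.componentGraph A).Reachable (e, true, true) (e, false, true)) :
    Nat.card (G.faceGraph (insert e A)).ConnectedComponent + 1 ≤
      Nat.card (G.faceGraph A).ConnectedComponent := by
  set H := G.cutFaceGraph A e
  have hA : Nat.card H.ConnectedComponent ≤ Nat.card (G.faceGraph A).ConnectedComponent := by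
    refine card_connectedComponent_le_of_forall_adj_reachable fun x y hxy =>
      reachable_of_fromRel_adj (fun x y hxy => ?_) hxy
    rcases hxy with rfl | rfl
    · exact (cutFaceGraph_adj_t1 A e x).reachable
    by_cases hx : x.1 = e
    · obtain ⟨e', a, b⟩ := x
      obtain rfl : e' = e := hx
      rw [faceMove_mk_of_notMem he]
      exact cutFaceGraph_reachable_of_not_reachable h ..
    · exact (fromRel_adj_of_ne (faceMove_ne A x).symm (Or.inr (if_neg hx))).reachable
  have hAe : Nat.card (G.faceGraph (insert e A)).ConnectedComponent ≤
      Nat.card (H ⊔ edge (e, true, true) (e, false, true)).ConnectedComponent := by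
    refine card_connectedComponent_le_of_forall_adj_reachable fun x y hxy => ?_
    rcases hxy with hxy | hxy
    · refine reachable_of_fromRel_adj (fun x y hxy => ?_) hxy
      rcases hxy with rfl | rfl
      · exact (faceGraph_adj_t1 _ x).reachable
      by_cases hx : x.1 = e
      · rw [cutFaceMove_eq_self_iff.2 hx]
      · rw [cutFaceMove, if_neg hx, ← faceMove_insert_of_ne hx]
        exact (faceGraph_adj_faceMove _ x).reachable
    · rw [edge_adj] at hxy
      rcases hxy.1 with ⟨rfl, rfl⟩ | ⟨rfl, rfl⟩
      exacts [(faceGraph_adj_mk_of_mem (Finset.mem_insert_self e A) true true).reachable,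
        (faceGraph_adj_mk_of_mem (Finset.mem_insert_self e A) false true).reachable]
  have := card_connectedComponent_sup_edge_add_one_le (G := H) (u := (e, true, true))
    (v := (e, false, true)) fun hr => h (hr.mono (cutFaceGraph_le_componentGraph A e))
  omega

theorem card_vertexGraph_le (A : Finset G.E) :
    Nat.card G.vertexGraph.ConnectedComponent ≤
      A.card + Nat.card (G.componentGraph A).ConnectedComponent := by
  induction A using Finset.induction_on with
  | empty => simp [componentGraph_empty]
  | insert e A he ih =>
    have := card_componentGraph_le_insert_add_one A e
    rw [Finset.card_insert_of_notMem he]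
    omega

/-- Euler's inequality: the Euler genus `γ(A)` is nonnegative. -/
theorem card_vertexGraph_add_card_faceGraph_le (A : Finset G.E) :
    Nat.card G.vertexGraph.ConnectedComponent + Nat.card (G.faceGraph A).ConnectedComponent ≤
      2 * Nat.card (G.componentGraph A).ConnectedComponent + A.card := by
  induction A using Finset.induction_on with
  | empty => simp [componentGraph_empty, faceGraph_empty, two_mul]
  | insert e A he ih =>
    rw [Finset.card_insert_of_notMem he]
    by_cases hr : (G.componentGraph A).Reachable (e, true, true) (e, false, true)
    · have := card_componentGraph_le_insert_of_reachable hr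
      have := card_faceGraph_insert_le_add_one he
      omega
    · have := card_componentGraph_le_insert_add_one A e
      have := card_faceGraph_insert_add_one_le he hr
      omega

theorem cCount_add_rank_sub_rankSub_add_nullSub (A : Finset G.E) :
    G.cCount + (G.rank - G.rankSub A) + G.nullSub A = G.fSub A + G.genusSub A := by
  have hc : Nat.card (G.componentGraph Finset.univ).ConnectedComponent ≤
      Nat.card (G.componentGraph A).ConnectedComponent :=
    ConnectedComponent.card_le_card_of_le (componentGraph_mono (Finset.subset_univ A))
  have hv : Nat.card (G.componentGraph A).ConnectedComponent ≤
      Nat.card G.vertexGraph.ConnectedComponent := by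
    rw [← componentGraph_empty]
    exact ConnectedComponent.card_le_card_of_le (componentGraph_mono (Finset.empty_subset A))
  have hr := card_vertexGraph_le A
  have he := card_vertexGraph_add_card_faceGraph_le A
  simp only [rank, rankSub, nullSub, genusSub, cCount, vCount_eq, cSub_eq, fSub_eq]
  omega

section Valuations

open Finset

variable {k : ℕ}

section TypeAt

variable {c : G.Flag → Fin k} {e : G.E}

theorem whiteAt_iff : G.WhiteAt c e ↔ ∀ a b, c (e, a, b) = c (e, !a, b) := by
  simp only [WhiteAt, Bool.forall_bool, Bool.not_false, Bool.not_true]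
  grind

theorem blackAt_iff : G.BlackAt c e ↔ ∀ a b, c (e, a, b) = c (e, a, !b) := by
  simp only [BlackAt, Bool.forall_bool, Bool.not_false, Bool.not_true]
  grind

theorem totalAt_iff : G.TotalAt c e ↔ G.WhiteAt c e ∧ G.BlackAt c e := by
  simp only [TotalAt, WhiteAt, BlackAt]
  grind

theorem isRPermissible_iff :
    (G.IsValuation c ∧ ∀ e, ¬ (G.CrossAt c e ∧ ¬ G.TotalAt c e)) ↔
      (∀ x, c (G.t1 x) = c x) ∧ ∀ e, G.WhiteAt c e ∨ G.BlackAt c e := by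
  simp only [IsValuation, TotalAt, WhiteAt, BlackAt, CrossAt]
  grind

end TypeAt

variable (G) in
/-- `c` is constant on the closed curves of the state of `G_m` which smooths `v_e` along the
white faces for `e ∈ A` and along the black faces otherwise: these curves are the
components of `G.faceGraph A`, i.e. the boundary components of `(V, A)`. -/
def IsStateColouring (A : Finset G.E) (c : G.Flag → Fin k) : Prop :=
  ∀ x y, (G.faceGraph A).Adj x y → c x = c y

theorem isStateColouring_iff {A : Finset G.E} {c : G.Flag → Fin k} :
    G.IsStateColouring A c ↔ (∀ x, c (G.t1 x) = c x) ∧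
      (∀ e ∈ A, G.WhiteAt c e) ∧ ∀ e ∉ A, G.BlackAt c e := by
  have hmove : (∀ x, c x = c (G.faceMove A x)) ↔
      (∀ e ∈ A, G.WhiteAt c e) ∧ ∀ e ∉ A, G.BlackAt c e := by
    simp only [Prod.forall, whiteAt_iff, blackAt_iff]
    refine ⟨fun h => ⟨fun e he a b => ?_, fun e he a b => ?_⟩, fun ⟨hW, hB⟩ e a b => ?_⟩
    · simpa only [faceMove_mk_of_mem he] using h e a b
    · simpa only [faceMove_mk_of_notMem he] using h e a b
    · by_cases he : e ∈ A
      · rw [faceMove_mk_of_mem he]; exact hW e he a b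
      · rw [faceMove_mk_of_notMem he]; exact hB e he a b
  rw [IsStateColouring, faceGraph, forall_fromRel_adj_imp_eq_iff, ← hmove]
  simp only [or_imp, forall_and, forall_eq']
  exact and_congr_left' (forall_congr' fun _ => eq_comm)

theorem card_filter_isStateColouring (c : G.Flag → Fin k) :
    #{A | G.IsStateColouring A c} =
      if (∀ x, c (G.t1 x) = c x) ∧ ∀ e, G.WhiteAt c e ∨ G.BlackAt c e then
        2 ^ G.totalCount c
      else 0 := by
  split_ifs with h
  · set W : Finset G.E := {e | ¬ G.BlackAt c e}
    set U : Finset G.E := {e | G.WhiteAt c e}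
    have hsub : W ⊆ U := by
      intro e
      simpa only [W, U, mem_filter, mem_univ, true_and] using (h.2 e).resolve_right
    have hIcc : ({A | G.IsStateColouring A c} : Finset (Finset G.E)) = Icc W U := by
      ext A
      simp only [W, U, mem_filter, mem_univ, true_and, mem_Icc, isStateColouring_iff, h.1,
        implies_true, subset_iff, not_imp_comm]
      exact and_comm
    rw [hIcc, card_Icc_finset hsub, ← card_sdiff_of_subset hsub, totalCount]
    congr 2
    ext e
    simp only [W, U, mem_sdiff, mem_filter, mem_univ, true_and, not_not, totalAt_iff]
  · rw [card_eq_zero, filter_eq_empty_iff]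
    intro A _ hA
    rw [isStateColouring_iff] at hA
    refine h ⟨hA.1, fun e => ?_⟩
    by_cases he : e ∈ A
    exacts [Or.inl (hA.2.1 e he), Or.inr (hA.2.2 e he)]

theorem card_filter_isStateColouring_fst (A : Finset G.E) :
    #{φ : (G.Flag → Fin k) × (Fin G.isolated → Fin k) | G.IsStateColouring A φ.1} =
      k ^ G.fSub A := by
  have hc : Nat.card {c : G.Flag → Fin k // G.IsStateColouring A c} =
      k ^ Nat.card (G.faceGraph A).ConnectedComponent :=
    (card_forall_adj_eq (β := Fin k) (G.faceGraph A)).trans (by rw [Nat.card_fin])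
  rw [← Fintype.card_subtype, ← Nat.card_eq_fintype_card,
    Nat.card_congr Equiv.prodSubtypeFstEquivSubtypeProd, Nat.card_prod, hc, Nat.card_fun,
    Nat.card_fin, Nat.card_fin, fSub_eq, pow_add]

variable (k) in
theorem sum_kvalsR_two_pow_totalCount :
    ∑ φ ∈ G.kvalsR k, 2 ^ G.totalCount φ.1 = ∑ A : Finset G.E, k ^ G.fSub A := by
  calc ∑ φ ∈ G.kvalsR k, 2 ^ G.totalCount φ.1
      = ∑ φ : (G.Flag → Fin k) × (Fin G.isolated → Fin k),
          #{A | G.IsStateColouring A φ.1} := by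
        simp only [kvalsR, sum_filter, card_filter_isStateColouring, isRPermissible_iff]
    _ = ∑ A : Finset G.E,
          #{φ : (G.Flag → Fin k) × (Fin G.isolated → Fin k) | G.IsStateColouring A φ.1} :=
        sum_card_bipartiteAbove_eq_sum_card_bipartiteBelow _
    _ = ∑ A : Finset G.E, k ^ G.fSub A :=
        sum_congr rfl fun A _ => card_filter_isStateColouring_fst A

end Valuations

end RibbonGraph

/-- **Theorem (Korn–Pak).** For an embedded graph `G` and a natural number `k`,
`k^{c(G)} · R(G; k+1, k, 1/k) = Σ_{φ ∈ R(G_m,k)} 2^{total(φ)}`, the sum being over all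
`R`-permissible `k`-valuations of the canonically checkerboard coloured medial graph. -/
theorem KornPak_BR_eq_sum (G : RibbonGraph) (k : ℕ) (hk : 0 < k) :
    (k : ℚ) ^ G.cCount * G.BR ((k : ℚ) + 1) (k : ℚ) ((k : ℚ))⁻¹ =
      ∑ φ ∈ G.kvalsR k, 2 ^ G.totalCount φ.1 := by
  have hk0 : (k : ℚ) ≠ 0 := Nat.cast_ne_zero.2 hk.ne'
  have hterm : ∀ A : Finset G.E, (k : ℚ) ^ G.cCount *
      (((k : ℚ) + 1 - 1) ^ (G.rank - G.rankSub A) * (k : ℚ) ^ G.nullSub A *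
        ((k : ℚ))⁻¹ ^ G.genusSub A) = (k : ℚ) ^ G.fSub A := fun A => by
    rw [add_sub_cancel_right, ← mul_assoc, ← mul_assoc, ← pow_add, ← pow_add,
      G.cCount_add_rank_sub_rankSub_add_nullSub A, pow_add, mul_assoc, ← mul_pow,
      mul_inv_cancel₀ hk0, one_pow, mul_one]
  rw [RibbonGraph.BR, Finset.mul_sum, Finset.sum_congr rfl fun A _ => hterm A]
  exact_mod_cast (G.sum_kvalsR_two_pow_totalCount k).symm
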